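/- The formula ⟨⟨1⟩⟩◇(p ∧ ⟨⟨1⟩⟩◇q) → ⟨⟨1⟩⟩(◇p ∧ ◇q) is valid under perfect-recall strategy semantics of ATL+ but is not valid under positional (memoryless) strategy semantics; in particular, in the 4-state 2-agent CGM of Figure 1 the antecedent holds at S₀ under positional semantics while the consequent fails at S₀ under positional semantics. -/

import Mathlib

/-!
With perfect recall, a coalition that can force a visit to a `p`-state from which it can in
turn enforce `◇q` plays its first strategy until the history shows the first such visit, and
from then on the strategy enforcing `◇q` from that state.

A positional strategy cannot switch like this in the model of Figure 1. Agent 1 must play `a`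
at `S₀` to reach `p`, but `b` at `S₀` to reach `q` after `S₁`. Against agent 2 always playing
`a`, a fixed choice of `a` at `S₀` cycles through `S₀, S₁`, and a fixed choice of `b` moves
straight to `S₃` and stays there.
-/

/-- A concurrent game model: available actions (nonempty for each agent at each
state) and a deterministic outcome function. -/
structure CGM (Agt St Act : Type*) where
  act : Agt → St → Set Act
  act_nonempty : ∀ a s, (act a s).Nonempty
  out : St → (Agt → Act) → St

/-- A play `lam` starting at `s` is consistent with the perfect-recall collective
strategy `σ` of coalition `A` if each transition is effected by some available
action profile in which all members of `A` follow `σ` on the history so far. -/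
def ConsistentPlay {Agt St Act : Type*} (M : CGM Agt St Act) (s : St) (A : Set Agt)
    (σ : Agt → List St → Act) (lam : ℕ → St) : Prop :=
  lam 0 = s ∧ ∀ n, ∃ prof : Agt → Act,
    (∀ a, prof a ∈ M.act a (lam n)) ∧
    (∀ a ∈ A, prof a = σ a ((List.range (n + 1)).map lam)) ∧
    M.out (lam n) prof = lam (n + 1)

/-- `M, s ⊨ ⟨⟨A⟩⟩Φ` under perfect-recall semantics: some perfect-recall collective
strategy of `A`, prescribing only available actions, forces every consistent play
from `s` to satisfy the path property `Φ`. -/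
def CoopSat {Agt St Act : Type*} (M : CGM Agt St Act) (s : St) (A : Set Agt)
    (Φ : (ℕ → St) → Prop) : Prop :=
  ∃ σ : Agt → List St → Act,
    (∀ a ∈ A, ∀ (h : List St) (hne : h ≠ []), σ a h ∈ M.act a (h.getLast hne)) ∧
    ∀ lam, ConsistentPlay M s A σ lam → Φ lam

/-- A play consistent with a positional (memoryless) collective strategy. -/
def PosConsistentPlay {Agt St Act : Type*} (M : CGM Agt St Act) (s : St)
    (A : Set Agt) (σ : Agt → St → Act) (lam : ℕ → St) : Prop :=
  lam 0 = s ∧ ∀ n, ∃ prof : Agt → Act,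
    (∀ a, prof a ∈ M.act a (lam n)) ∧
    (∀ a ∈ A, prof a = σ a (lam n)) ∧
    M.out (lam n) prof = lam (n + 1)

/-- `M, s ⊨ ⟨⟨A⟩⟩Φ` under positional (memoryless) strategy semantics. -/
def PosSat {Agt St Act : Type*} (M : CGM Agt St Act) (s : St) (A : Set Agt)
    (Φ : (ℕ → St) → Prop) : Prop :=
  ∃ σ : Agt → St → Act,
    (∀ a ∈ A, ∀ t, σ a t ∈ M.act a t) ∧
    ∀ lam, PosConsistentPlay M s A σ lam → Φ lam

/-- The concurrent game model of Figure 1: states `S₀,S₁,S₂,S₃`, agents `1,2`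
(indices `0,1`), actions `a,b` (indices `0,1`); from `S₀`: `(a,a) ↦ S₁`,
`(a,b) ↦ S₂`, `(b,·) ↦ S₃`; `S₁ →(a,a) S₀`; `S₂ →(a,a) S₃`; `S₃` loops. -/
def figM : CGM (Fin 2) (Fin 4) (Fin 2) where
  act := fun _ s => if s = 0 then Set.univ else {0}
  act_nonempty := by
    intro a s
    by_cases h : s = (0 : Fin 4) <;> simp [h]
  out := fun s prof =>
    if s = 0 then (if prof 0 = 0 then (if prof 1 = 0 then 1 else 2) else 3)
    else if s = 1 then 0 else 3

/-- In `figM`, `p` holds exactly at `S₁, S₂` and `q` exactly at `S₃`. -/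
def pProp (s : Fin 4) : Prop := s = 1 ∨ s = 2
def qProp (s : Fin 4) : Prop := s = 3

section PerfectRecall

variable {Agt St Act : Type*} {M : CGM Agt St Act} {s : St} {A : Set Agt}

def history (lam : ℕ → St) (n : ℕ) : List St := (List.range (n + 1)).map lam

lemma length_history (lam : ℕ → St) (n : ℕ) : (history lam n).length = n + 1 := by
  simp [history]

lemma getElem_history (lam : ℕ → St) (n i : ℕ) (hi : i < (history lam n).length) :
    (history lam n)[i] = lam i := by
  simp [history]

lemma drop_history (lam : ℕ → St) (m n : ℕ) :
    (history lam (m + n)).drop m = history (fun k => lam (m + k)) n := by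
  apply List.ext_getElem
  · simp only [List.length_drop, length_history]; omega
  · intro i _ _
    simp [history]

lemma ConsistentPlay.congr {σ τ : Agt → List St → Act} {lam : ℕ → St}
    (h : ConsistentPlay M s A σ lam)
    (hστ : ∀ n, ∀ a ∈ A, σ a (history lam n) = τ a (history lam n)) :
    ConsistentPlay M s A τ lam := by
  refine ⟨h.1, fun n => ?_⟩
  obtain ⟨prof, hav, hfollow, hout⟩ := h.2 n
  exact ⟨prof, hav, fun a ha => (hfollow a ha).trans (hστ n a ha), hout⟩

lemma ConsistentPlay.shift {σ τ : Agt → List St → Act} {lam : ℕ → St}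
    (h : ConsistentPlay M s A σ lam) (i : ℕ)
    (hστ : ∀ n, ∀ a ∈ A, σ a (history lam (i + n)) = τ a (history (fun k => lam (i + k)) n)) :
    ConsistentPlay M (lam i) A τ (fun k => lam (i + k)) := by
  refine ⟨rfl, fun n => ?_⟩
  obtain ⟨prof, hav, hfollow, hout⟩ := h.2 (i + n)
  exact ⟨prof, hav, fun a ha => (hfollow a ha).trans (hστ n a ha), hout⟩

open Classical in
/-- Follow `σ` until the history first visits a `Good` state `t`, then follow `τ t` on the
part of the history from that visit on. -/
noncomputable def switchStrategy (Good : St → Prop) (σ : Agt → List St → Act)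
    (τ : St → Agt → List St → Act) (a : Agt) (h : List St) : Act :=
  if hi : h.findIdx (fun t => Good t) < h.length then
    τ h[h.findIdx (fun t => Good t)] a (h.drop (h.findIdx (fun t => Good t)))
  else σ a h

lemma switchStrategy_mem_act {Good : St → Prop} {σ : Agt → List St → Act}
    {τ : St → Agt → List St → Act}
    (hσ : ∀ a ∈ A, ∀ (h : List St) (hne : h ≠ []), σ a h ∈ M.act a (h.getLast hne))
    (hτ : ∀ t, Good t → ∀ a ∈ A, ∀ (h : List St) (hne : h ≠ []),
      τ t a h ∈ M.act a (h.getLast hne)) :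
    ∀ a ∈ A, ∀ (h : List St) (hne : h ≠ []),
      switchStrategy Good σ τ a h ∈ M.act a (h.getLast hne) := by
  classical
  intro a ha h hne
  unfold switchStrategy
  split_ifs with hi
  · have hdrop : h.drop (h.findIdx (fun t => Good t)) ≠ [] := by
      simpa [List.drop_eq_nil_iff] using hi
    rw [← List.getLast_drop hdrop]
    exact hτ _ (by simpa using List.findIdx_getElem (w := hi)) a ha _ hdrop
  · exact hσ a ha h hne

lemma switchStrategy_history_of_forall_not {Good : St → Prop} {σ : Agt → List St → Act}
    (τ : St → Agt → List St → Act) (a : Agt) {lam : ℕ → St} {n : ℕ}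
    (hno : ∀ m ≤ n, ¬ Good (lam m)) :
    switchStrategy Good σ τ a (history lam n) = σ a (history lam n) := by
  classical
  unfold switchStrategy
  rw [dif_neg]
  rw [List.findIdx_lt_length]
  rintro ⟨t, ht, hgood⟩
  obtain ⟨m, hm, rfl⟩ := List.mem_map.1 ht
  exact hno m (by simpa [Nat.lt_succ_iff] using hm) (by simpa using hgood)

lemma switchStrategy_history_of_isLeast {Good : St → Prop} (σ : Agt → List St → Act)
    (τ : St → Agt → List St → Act) (a : Agt) {lam : ℕ → St} {i : ℕ}
    (hgood : Good (lam i)) (hmin : ∀ m < i, ¬ Good (lam m)) (n : ℕ) :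
    switchStrategy Good σ τ a (history lam (i + n))
      = τ (lam i) a (history (fun k => lam (i + k)) n) := by
  classical
  have hi : i < (history lam (i + n)).length := by rw [length_history]; omega
  have hfind : (history lam (i + n)).findIdx (fun t => Good t) = i := by
    rw [List.findIdx_eq hi]
    refine ⟨by simpa [getElem_history] using hgood, fun j hj => ?_⟩
    simpa [getElem_history] using hmin j hj
  unfold switchStrategy
  rw [dif_pos (by rw [hfind]; exact hi)]
  simp only [hfind, getElem_history, drop_history]

theorem CoopSat.exists_suffix_of_exists_coopSat {P : St → Prop} {Φ : (ℕ → St) → Prop}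
    (h : CoopSat M s A (fun lam => ∃ i, P (lam i) ∧ CoopSat M (lam i) A Φ)) :
    CoopSat M s A (fun lam => ∃ i, P (lam i) ∧ Φ (fun k => lam (i + k))) := by
  classical
  set Good : St → Prop := fun t => P t ∧ CoopSat M t A Φ
  obtain ⟨σ, hσ_act, hσ⟩ := h
  have hτ : ∀ t, ∃ τ : Agt → List St → Act, Good t →
      (∀ a ∈ A, ∀ (h : List St) (hne : h ≠ []), τ a h ∈ M.act a (h.getLast hne)) ∧
        ∀ mu, ConsistentPlay M t A τ mu → Φ mu := fun t =>
    if ht : Good t then ⟨ht.2.choose, fun _ => ht.2.choose_spec⟩ else ⟨σ, fun h => (ht h).elim⟩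
  choose τ hτ using hτ
  refine ⟨switchStrategy Good σ τ,
    switchStrategy_mem_act hσ_act fun t ht => (hτ t ht).1, fun lam hlam => ?_⟩
  have hvisit : ∃ i, Good (lam i) := by
    by_contra! hno
    obtain ⟨i, hi⟩ := hσ lam <| hlam.congr fun n a _ =>
      switchStrategy_history_of_forall_not τ a fun m _ => hno m
    exact hno i hi
  set i := Nat.find hvisit
  have hgood : Good (lam i) := Nat.find_spec hvisit
  refine ⟨i, hgood.1, (hτ _ hgood).2 _ <| hlam.shift i fun n a _ => ?_⟩
  exact switchStrategy_history_of_isLeast σ τ a hgood (fun m hm => Nat.find_min hvisit hm) n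

end PerfectRecall

section Positional

variable {Agt St Act : Type*}

def posOutcome (M : CGM Agt St Act) (s : St) (prof : Agt → St → Act) : ℕ → St
  | 0 => s
  | n + 1 => M.out (posOutcome M s prof n) fun a => prof a (posOutcome M s prof n)

lemma posConsistentPlay_posOutcome {M : CGM Agt St Act} {s : St} {A : Set Agt}
    {σ prof : Agt → St → Act} (hprof : ∀ a t, prof a t ∈ M.act a t)
    (hA : ∀ a ∈ A, prof a = σ a) :
    PosConsistentPlay M s A σ (posOutcome M s prof) :=
  ⟨rfl, fun n => ⟨fun a => prof a (posOutcome M s prof n), fun a => hprof a _,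
    fun a ha => congrFun (hA a ha) _, rfl⟩⟩

lemma PosConsistentPlay.exists_succ_eq {M : CGM (Fin 2) St Act} {s : St}
    {σ : Fin 2 → St → Act} {lam : ℕ → St} (h : PosConsistentPlay M s {0} σ lam) (n : ℕ) :
    ∃ b, lam (n + 1) = M.out (lam n) ![σ 0 (lam n), b] := by
  obtain ⟨prof, -, hfollow, hout⟩ := h.2 n
  refine ⟨prof 1, hout ▸ congrArg _ (funext fun i => ?_)⟩
  fin_cases i
  · exact hfollow 0 rfl
  · rfl

end Positional

lemma figM_posSat_eventually_qProp {t : Fin 4} (ht : pProp t) :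
    PosSat figM t {0} (fun mu => ∃ j, qProp (mu j)) := by
  refine ⟨fun _ u => if u = 0 then 1 else 0, fun _ _ u => ?_, fun lam hlam => ?_⟩
  · by_cases hu : u = 0 <;> simp [figM, hu]
  obtain ⟨b₁, h₁⟩ := hlam.exists_succ_eq 0
  obtain ⟨b₂, h₂⟩ := hlam.exists_succ_eq 1
  rcases ht with rfl | rfl
  · have hlam₁ : lam 1 = 0 := by simp [h₁, hlam.1, figM]
    exact ⟨2, by simp [qProp, h₂, hlam₁, figM]⟩
  · exact ⟨1, by simp [qProp, h₁, hlam.1, figM]⟩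

lemma figM_posSat_eventually_pProp_and_posSat :
    PosSat figM 0 {0}
      (fun lam => ∃ i, pProp (lam i) ∧
        PosSat figM (lam i) {0} (fun mu => ∃ j, qProp (mu j))) := by
  refine ⟨fun _ _ => 0, fun _ _ t => ?_, fun lam hlam => ?_⟩
  · by_cases ht : t = 0 <;> simp [figM, ht]
  obtain ⟨b, h₁⟩ := hlam.exists_succ_eq 0
  have hp : pProp (lam 1) := by
    fin_cases b <;> simp [pProp, h₁, hlam.1, figM]
  exact ⟨1, hp, figM_posSat_eventually_qProp hp⟩

lemma figM_posOutcome_eq_zero_or_eq_one {f : Fin 4 → Fin 2} (hf : f 0 = 0) (n : ℕ) :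
    posOutcome figM 0 ![f, fun _ => 0] n = 0 ∨ posOutcome figM 0 ![f, fun _ => 0] n = 1 := by
  induction n with
  | zero => exact Or.inl rfl
  | succ n ih => rw [posOutcome]; rcases ih with h | h <;> rw [h] <;> simp [hf, figM]

lemma figM_posOutcome_eq_zero_or_eq_three {f : Fin 4 → Fin 2} (hf : f 0 = 1) (n : ℕ) :
    posOutcome figM 0 ![f, fun _ => 0] n = 0 ∨ posOutcome figM 0 ![f, fun _ => 0] n = 3 := by
  induction n with
  | zero => exact Or.inl rfl
  | succ n ih => rw [posOutcome]; rcases ih with h | h <;> rw [h] <;> simp [hf, figM]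

lemma figM_not_posSat_eventually_pProp_and_eventually_qProp :
    ¬ PosSat figM 0 {0} (fun lam => (∃ i, pProp (lam i)) ∧ (∃ j, qProp (lam j))) := by
  rintro ⟨σ, hσ, hforce⟩
  have hplay : PosConsistentPlay figM 0 {0} σ (posOutcome figM 0 ![σ 0, fun _ => 0]) := by
    refine posConsistentPlay_posOutcome (fun a t => ?_) (by rintro a rfl; rfl)
    fin_cases a
    · exact hσ 0 rfl t
    · by_cases ht : t = 0 <;> simp [figM, ht]
  obtain ⟨⟨i, hi⟩, j, hj⟩ := hforce _ hplay
  obtain h | h : σ 0 0 = 0 ∨ σ 0 0 = 1 := by omega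
  · rcases figM_posOutcome_eq_zero_or_eq_one h j with h | h <;> simp [qProp, h] at hj
  · rcases figM_posOutcome_eq_zero_or_eq_three h i with h | h <;> simp [pProp, h] at hi

/-- the formula `⟨⟨1⟩⟩◇(p ∧ ⟨⟨1⟩⟩◇q) → ⟨⟨1⟩⟩(◇p ∧ ◇q)` is valid under
perfect-recall semantics (over all 2-agent CGMs), but under positional semantics
the antecedent holds at `S₀` of the model of Figure 1 while the consequent fails
there. -/
theorem perfect_recall_vs_positional :
    (∀ (St Act : Type) (M : CGM (Fin 2) St Act) (s : St) (p q : St → Prop),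
      CoopSat M s {0}
        (fun lam => ∃ i, p (lam i) ∧
          CoopSat M (lam i) {0} (fun mu => ∃ j, q (mu j))) →
      CoopSat M s {0} (fun lam => (∃ i, p (lam i)) ∧ (∃ j, q (lam j)))) ∧
    PosSat figM 0 {0}
      (fun lam => ∃ i, pProp (lam i) ∧
        PosSat figM (lam i) {0} (fun mu => ∃ j, qProp (mu j))) ∧
    ¬ PosSat figM 0 {0}
      (fun lam => (∃ i, pProp (lam i)) ∧ (∃ j, qProp (lam j))) := by
  refine ⟨fun St Act M s p q h => ?_, figM_posSat_eventually_pProp_and_posSat,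
    figM_not_posSat_eventually_pProp_and_eventually_qProp⟩
  obtain ⟨σ, hσ_act, hσ⟩ := CoopSat.exists_suffix_of_exists_coopSat h
  refine ⟨σ, hσ_act, fun lam hlam => ?_⟩
  obtain ⟨i, hp, j, hq⟩ := hσ lam hlam
  exact ⟨⟨i, hp⟩, i + j, hq⟩
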